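/- Let x₀ ∈ ℝ and let y₀, y₁ ≥ 0 be not both zero. Then the Legendre–Fenchel transform satisfies Λ*(x₀, y₀, x₀, y₁) = 2·(y₁ − y₀)². -/

import Mathlib

/-!
The supremum is attained at `(δ, γ) = (0, 4 (y₁ - y₀))`, where the objective is the concave quadratic
`y₁γ - γ²/8 - y₀γ`. For `0 < |δ| < π` the `x₀`-terms cancel because `x₁ = x₀`, and what is left is a
concave quadratic in `γ`; with `θ = δ / 2`, its maximum stays below `2 (y₁ - y₀)²` because of
`θ² (1 + cos θ) ≤ 2θ sin θ`, which is `tan (θ/2) ≥ θ/2` in disguise.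
-/

/-- The limiting cumulant generating function `Λ` for the Grushin model with
initial point `(x₀, y₀)`: for `0 < |δ| < π`,
`Λ(δ,γ) = [(4δ²y₀² + γ²)·sin(δ/2) + 4x₀δ²·cos(δ/2) + 4y₀γδ] / (4δ·cos(δ/2))`;
`Λ(0,γ) = γ²/8 + y₀γ`; and `Λ(δ,γ) = +∞` for `|δ| ≥ π`. -/
noncomputable def Lam (x0 y0 : ℝ) (δ γ : ℝ) : EReal :=
  if |δ| < Real.pi then
    if δ = 0 then ((γ ^ 2 / 8 + y0 * γ : ℝ) : EReal)
    else ((((4 * δ ^ 2 * y0 ^ 2 + γ ^ 2) * Real.sin (δ / 2) + 4 * x0 * δ ^ 2 * Real.cos (δ / 2) +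
        4 * y0 * γ * δ) / (4 * δ * Real.cos (δ / 2)) : ℝ) : EReal)
  else ⊤

/-- The Legendre–Fenchel transform `Λ*(x₀,y₀,x₁,y₁) = sup_{(δ,γ)} [x₁δ + y₁γ − Λ(δ,γ)]`. -/
noncomputable def LamStar (x0 y0 x1 y1 : ℝ) : EReal :=
  ⨆ p : ℝ × ℝ, (((x1 * p.1 + y1 * p.2 : ℝ) : EReal) - Lam x0 y0 p.1 p.2)

open Real

/-- In half-angle form this is `u ≤ tan u` for `u = θ / 2`. -/
lemma mul_one_add_cos_le_two_mul_sin {θ : ℝ} (h0 : 0 ≤ θ) (hπ : θ < π) :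
    θ * (1 + cos θ) ≤ 2 * sin θ := by
  obtain ⟨u, rfl⟩ : ∃ u, θ = 2 * u := ⟨θ / 2, by ring⟩
  have hcos : 0 < cos u := cos_pos_of_mem_Ioo ⟨by linarith, by linarith⟩
  have hu : u * cos u ≤ sin u := by
    have := le_tan (x := u) (by linarith) (by linarith)
    rwa [tan_eq_sin_div_cos, le_div_iff₀ hcos] at this
  rw [cos_two_mul, sin_two_mul]
  nlinarith

lemma sq_mul_one_add_cos_le_two_mul_mul_sin {θ : ℝ} (hθ : |θ| < π) :
    θ ^ 2 * (1 + cos θ) ≤ 2 * θ * sin θ := by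
  rcases le_total 0 θ with h0 | h0
  · nlinarith [mul_one_add_cos_le_two_mul_sin h0 (abs_lt.mp hθ).2]
  · have := mul_one_add_cos_le_two_mul_sin (θ := -θ) (by linarith) (by linarith [abs_lt.mp hθ])
    rw [cos_neg, sin_neg] at this
    nlinarith

/-- With `θ = δ / 2`, the gap times `8θ sin θ cos θ > 0` is the sum of squares
`(γ sin θ + 4θ (y₀ - y₁ cos θ))² + 8 cos θ ((2θ sin θ - θ² (1 + cos θ)) (y₀ - y₁)² + θ² (1 - cos θ) (y₀ + y₁)²)`. -/
lemma legendre_objective_le_of_ne_zero (x0 y0 y1 γ : ℝ) {δ : ℝ} (hδ0 : δ ≠ 0) (hδ : |δ| < π) :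
    x0 * δ + y1 * γ -
      ((4 * δ ^ 2 * y0 ^ 2 + γ ^ 2) * sin (δ / 2) + 4 * x0 * δ ^ 2 * cos (δ / 2) +
        4 * y0 * γ * δ) / (4 * δ * cos (δ / 2)) ≤ 2 * (y1 - y0) ^ 2 := by
  obtain ⟨θ, rfl⟩ : ∃ θ, δ = 2 * θ := ⟨δ / 2, by ring⟩
  rw [mul_div_cancel_left₀ θ two_ne_zero]
  have hθ0 : θ ≠ 0 := by rintro rfl; simp at hδ0
  have hθ : |θ| < π / 2 := by rw [abs_mul, abs_two] at hδ; linarith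
  have hc : 0 < cos θ := cos_pos_of_mem_Ioo (abs_lt.mp hθ)
  have hc1 : cos θ ≤ 1 := cos_le_one θ
  have htrig := sq_mul_one_add_cos_le_two_mul_mul_sin (θ := θ) (by linarith [pi_pos])
  have hθs : 0 < θ * sin θ := by
    have : 0 < θ ^ 2 * (1 + cos θ) := by positivity
    linarith
  have hs : sin θ ≠ 0 := by rintro h; simp [h] at hθs
  rw [← sub_nonneg]
  have gap : 2 * (y1 - y0) ^ 2 - (x0 * (2 * θ) + y1 * γ -
      ((4 * (2 * θ) ^ 2 * y0 ^ 2 + γ ^ 2) * sin θ + 4 * x0 * (2 * θ) ^ 2 * cos θ +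
        4 * y0 * γ * (2 * θ)) / (4 * (2 * θ) * cos θ)) =
      ((γ * sin θ + 4 * θ * (y0 - y1 * cos θ)) ^ 2 + 8 * cos θ *
        ((2 * θ * sin θ - θ ^ 2 * (1 + cos θ)) * (y0 - y1) ^ 2 +
          θ ^ 2 * (1 - cos θ) * (y0 + y1) ^ 2)) / (8 * (θ * sin θ) * cos θ) := by
    field_simp
    linear_combination 128 * y0 ^ 2 * θ ^ 2 * sin_sq_add_cos_sq θ
  rw [gap]
  apply div_nonneg _ (by positivity)
  have : 0 ≤ 2 * θ * sin θ - θ ^ 2 * (1 + cos θ) := by linarith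
  have : 0 ≤ 1 - cos θ := by linarith
  positivity

lemma legendre_objective_le (x0 y0 y1 δ γ : ℝ) :
    ((x0 * δ + y1 * γ : ℝ) : EReal) - Lam x0 y0 δ γ ≤ ((2 * (y1 - y0) ^ 2 : ℝ) : EReal) := by
  unfold Lam
  split_ifs with hδ hδ0
  · subst hδ0
    rw [← EReal.coe_sub, EReal.coe_le_coe_iff]
    nlinarith [sq_nonneg (γ - 4 * (y1 - y0))]
  · rw [← EReal.coe_sub, EReal.coe_le_coe_iff]
    exact legendre_objective_le_of_ne_zero x0 y0 y1 γ hδ0 hδ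
  · simp

lemma legendre_objective_at_zero (x0 y0 y1 : ℝ) :
    ((x0 * 0 + y1 * (4 * (y1 - y0)) : ℝ) : EReal) - Lam x0 y0 0 (4 * (y1 - y0)) =
      ((2 * (y1 - y0) ^ 2 : ℝ) : EReal) := by
  rw [Lam, if_pos (by simpa using pi_pos), if_pos rfl, ← EReal.coe_sub]
  congr 1
  ring

theorem legendre_transform_vertical_general (x0 y0 y1 : ℝ) :
    LamStar x0 y0 x0 y1 = ((2 * (y1 - y0) ^ 2 : ℝ) : EReal) :=
  le_antisymm (iSup_le fun p => legendre_objective_le x0 y0 y1 p.1 p.2)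
    (legendre_objective_at_zero x0 y0 y1 ▸ le_iSup_of_le (0, 4 * (y1 - y0)) le_rfl)

/-- Theorem: for a vertical displacement, `Λ*(x₀, y₀, x₀, y₁) = 2(y₁ − y₀)²`. -/
theorem legendre_transform_vertical (x0 y0 y1 : ℝ)
    (hy0 : 0 ≤ y0) (hy1 : 0 ≤ y1) (hy : ¬(y0 = 0 ∧ y1 = 0)) :
    LamStar x0 y0 x0 y1 = ((2 * (y1 - y0) ^ 2 : ℝ) : EReal) :=
  legendre_transform_vertical_general x0 y0 y1
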